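/- arXiv:2411.19476 — 2 statements merged into one kernel-verified Lean document; each statement's English description precedes it below -/
import Mathlib

section
/- Let G = G_l ⊙ G_r be a false twin composition, let D ∈ D_k(G), and let X ⊆ D ∩ TS(G) with |X| = k be such that the subgraph of G induced by D − X has a perfect matching M. Set D_l = D ∩ V(G_l), D_r = D ∩ V(G_r), k_l = |X ∩ TS(G_l)| and k_r = |X ∩ TS(G_r)|. Then D_l ∈ D_{k_l}(G_l) and D_r ∈ D_{k_r}(G_r); moreover X ∩ TS(G_l) and X ∩ TS(G_r) are sets of unpaired vertices with respect to (D_l, M ∩ E(G_l)) and (D_r, M ∩ E(G_r)), respectively. -/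
/-- A finite simple graph on a subset of an ambient vertex type `α`,
together with a designated twin set `TS ⊆ verts`. -/
structure TSGraph (α : Type*) where
  verts : Finset α
  Adj : α → α → Prop
  symm : ∀ u v, Adj u v → Adj v u
  irrefl : ∀ u, ¬ Adj u u
  adj_mem : ∀ u v, Adj u v → u ∈ verts ∧ v ∈ verts
  TS : Finset α
  TS_sub : TS ⊆ verts

namespace TSGraph

variable {α : Type*} [DecidableEq α]

/-- `f` encodes a perfect matching of the subgraph of `G` induced by `S`:
every vertex of `S` is paired with an adjacent vertex of `S`, involutively. -/
def IsPM (G : TSGraph α) (S : Finset α) (f : α → α) : Prop :=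
  ∀ v ∈ S, f v ∈ S ∧ G.Adj v (f v) ∧ f (f v) = v

/-- `S ⊆ V(G)` dominates `V(G) − TS(G)` and, for some `X ⊆ S ∩ TS(G)` of size `k`,
the subgraph induced by `S − X` has a perfect matching. -/
def Adm (G : TSGraph α) (k : ℕ) (S : Finset α) : Prop :=
  S ⊆ G.verts ∧
  (∀ v ∈ G.verts, v ∉ G.TS → v ∈ S ∨ ∃ u ∈ S, G.Adj u v) ∧
  ∃ X ⊆ S ∩ G.TS, X.card = k ∧ ∃ f, G.IsPM (S \ X) f

/-- Membership in the family `D_k(G)`: admissible of minimum cardinality. -/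
def memD (G : TSGraph α) (k : ℕ) (S : Finset α) : Prop :=
  G.Adm k S ∧ ∀ S', G.Adm k S' → S.card ≤ S'.card

/-- `D_k(G) ≠ ∅`. -/
def DkNonempty (G : TSGraph α) (k : ℕ) : Prop := ∃ S, G.memD k S

/-- `D_k(G) ≠ ∅` for all `0 ≤ k ≤ |TS(G)|`. -/
def AllDkNonempty (G : TSGraph α) : Prop := ∀ k ≤ G.TS.card, G.DkNonempty k

/-- `γ_k(G)`: the common cardinality of the members of `D_k(G)`. -/
noncomputable def gamma (G : TSGraph α) (k : ℕ) : ℕ :=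
  sInf {n | ∃ S, G.Adm k S ∧ S.card = n}

/-- A paired-dominating set of `G`. -/
def IsPDS (G : TSGraph α) (D : Finset α) : Prop :=
  D ⊆ G.verts ∧
  (∀ v ∈ G.verts, v ∈ D ∨ ∃ u ∈ D, G.Adj u v) ∧
  ∃ f, G.IsPM D f

/-- `γ_p(G)`: the paired-domination number. -/
noncomputable def gammaP (G : TSGraph α) : ℕ :=
  sInf {n | ∃ D, G.IsPDS D ∧ D.card = n}

/-- Membership in `D_p(G)`: minimum-cardinality paired-dominating sets. -/
def memDp (G : TSGraph α) (D : Finset α) : Prop :=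
  G.IsPDS D ∧ D.card = G.gammaP

/-- `min(G) = min { γ_k(G) : 0 ≤ k ≤ |TS(G)| }`. -/
noncomputable def minVal (G : TSGraph α) : ℕ :=
  sInf {n | ∃ k ≤ G.TS.card, G.gamma k = n}

/-- `α(G)`: the smallest `k` with `γ_k(G) = min(G)`. -/
noncomputable def alphaVal (G : TSGraph α) : ℕ :=
  sInf {k | k ≤ G.TS.card ∧ G.gamma k = G.minVal}

/-- `β(G)`: the largest `k` with `γ_k(G) = min(G)`. -/
noncomputable def betaVal (G : TSGraph α) : ℕ :=
  sSup {k | k ≤ G.TS.card ∧ G.gamma k = G.minVal}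

/-- Membership in `Ψ(G)`: sets in some `D_k(G)` of cardinality `min(G)`. -/
def memPsi (G : TSGraph α) (D : Finset α) : Prop :=
  (∃ k, k ≤ G.TS.card ∧ G.memD k D) ∧ D.card = G.minVal

/-- Equation (2) holds for `G`. -/
def Eq2Holds (G : TSGraph α) : Prop :=
  ∀ k ≤ G.TS.card,
    (k ≤ G.alphaVal → G.gamma k = G.minVal + G.alphaVal - k) ∧
    (G.betaVal ≤ k → G.gamma k = G.minVal + k - G.betaVal) ∧
    (G.alphaVal < k → k < G.betaVal → Even (k - G.alphaVal) → G.gamma k = G.minVal) ∧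
    (G.alphaVal < k → k < G.betaVal → ¬ Even (k - G.alphaVal) → G.gamma k = G.minVal + 1)

/-- `G = Gl ⊗ Gr` (true twin composition). -/
def IsTrueTwin (G Gl Gr : TSGraph α) : Prop :=
  Disjoint Gl.verts Gr.verts ∧
  G.verts = Gl.verts ∪ Gr.verts ∧
  (∀ u v, G.Adj u v ↔ Gl.Adj u v ∨ Gr.Adj u v ∨
    (u ∈ Gl.TS ∧ v ∈ Gr.TS) ∨ (u ∈ Gr.TS ∧ v ∈ Gl.TS)) ∧
  G.TS = Gl.TS ∪ Gr.TS

/-- `G = Gl ⊙ Gr` (false twin composition). -/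
def IsFalseTwin (G Gl Gr : TSGraph α) : Prop :=
  Disjoint Gl.verts Gr.verts ∧
  G.verts = Gl.verts ∪ Gr.verts ∧
  (∀ u v, G.Adj u v ↔ Gl.Adj u v ∨ Gr.Adj u v) ∧
  G.TS = Gl.TS ∪ Gr.TS

/-- `G = Gl ⊕ Gr` (attachment composition). -/
def IsAttach (G Gl Gr : TSGraph α) : Prop :=
  Disjoint Gl.verts Gr.verts ∧
  G.verts = Gl.verts ∪ Gr.verts ∧
  (∀ u v, G.Adj u v ↔ Gl.Adj u v ∨ Gr.Adj u v ∨
    (u ∈ Gl.TS ∧ v ∈ Gr.TS) ∨ (u ∈ Gr.TS ∧ v ∈ Gl.TS)) ∧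
  G.TS = Gl.TS

/-- The twin-set graph `G` arises from a decomposition tree all of whose associated
twin-set graphs satisfy the property `P`. -/
inductive FromDecompTree (P : TSGraph α → Prop) : TSGraph α → Prop where
  | single (G : TSGraph α) (v : α) (hv : G.verts = {v}) (hts : G.TS = {v})
      (hadj : ∀ u w, ¬ G.Adj u w) (hP : P G) : FromDecompTree P G
  | ttwin (G Gl Gr : TSGraph α) (hl : FromDecompTree P Gl) (hr : FromDecompTree P Gr)
      (h : IsTrueTwin G Gl Gr) (hP : P G) : FromDecompTree P G
  | ftwin (G Gl Gr : TSGraph α) (hl : FromDecompTree P Gl) (hr : FromDecompTree P Gr)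
      (h : IsFalseTwin G Gl Gr) (hP : P G) : FromDecompTree P G
  | attach (G Gl Gr : TSGraph α) (hl : FromDecompTree P Gl) (hr : FromDecompTree P Gr)
      (h : IsAttach G Gl Gr) (hP : P G) : FromDecompTree P G

end TSGraph

/-!
No edge of `G = Gl ⊙ Gr` joins `Gl` and `Gr`, so domination of the non-twin vertices, perfect
matchings and unpaired sets of `G` split into those of `Gl` and `Gr`, and conversely glue back
together. Hence `D ∩ V(Gl)` is admissible for `k_l` in `Gl`; and were some admissible set `S'`
of `Gl` smaller, `S' ∪ (D ∩ V(Gr))` would be admissible for `k = k_l + k_r` in `G` and smaller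
than `D`.
-/

theorem Finset.card_inter_add_card_inter_of_subset_union {β : Type*} [DecidableEq β]
    {s a b : Finset β} (hab : Disjoint a b) (hs : s ⊆ a ∪ b) :
    (s ∩ a).card + (s ∩ b).card = s.card := by
  rw [← Finset.card_union_of_disjoint
      (hab.mono Finset.inter_subset_right Finset.inter_subset_right),
    ← Finset.inter_union_distrib_left, Finset.inter_eq_left.2 hs]

namespace TSGraph

theorem IsPM.subset_verts {α : Type*} {G : TSGraph α} {S : Finset α} {f : α → α}
    (hf : G.IsPM S f) : S ⊆ G.verts :=
  fun v hv => (G.adj_mem _ _ (hf v hv).2.1).1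

variable {α : Type*} [DecidableEq α]

def DominatesNonTwins (G : TSGraph α) (S : Finset α) : Prop :=
  ∀ v ∈ G.verts, v ∉ G.TS → v ∈ S ∨ ∃ u ∈ S, G.Adj u v

theorem inter_TS_subset (Gl : TSGraph α) {S X : Finset α} (hX : X ⊆ S) :
    X ∩ Gl.TS ⊆ S ∩ Gl.verts ∩ Gl.TS :=
  fun _ hx =>
    Finset.mem_inter.2 ⟨Finset.mem_inter.2 ⟨hX (Finset.mem_inter.1 hx).1,
      Gl.TS_sub (Finset.mem_inter.1 hx).2⟩, (Finset.mem_inter.1 hx).2⟩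

namespace IsFalseTwin

variable {G Gl Gr : TSGraph α} {S X Sl Sr : Finset α} {f g : α → α} {u v : α}

theorem symm (hcomp : IsFalseTwin G Gl Gr) : IsFalseTwin G Gr Gl := by
  obtain ⟨hdisj, hverts, hadj, hts⟩ := hcomp
  exact ⟨hdisj.symm, by rw [hverts, Finset.union_comm], fun u v => by rw [hadj]; tauto,
    by rw [hts, Finset.union_comm]⟩

theorem notMem_right_of_mem_left (hcomp : IsFalseTwin G Gl Gr) (hv : v ∈ Gl.verts) :
    v ∉ Gr.verts :=
  Finset.disjoint_left.1 hcomp.1 hv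

theorem adj_iff_left (hcomp : IsFalseTwin G Gl Gr) (h : u ∈ Gl.verts ∨ v ∈ Gl.verts) :
    G.Adj u v ↔ Gl.Adj u v := by
  rw [hcomp.2.2.1]
  refine ⟨fun hadj => hadj.resolve_right fun hr => ?_, Or.inl⟩
  obtain ⟨hu, hv⟩ := Gr.adj_mem _ _ hr
  rcases h with h | h
  · exact hcomp.notMem_right_of_mem_left h hu
  · exact hcomp.notMem_right_of_mem_left h hv

theorem mem_TS_iff_left (hcomp : IsFalseTwin G Gl Gr) (hv : v ∈ Gl.verts) :
    v ∈ G.TS ↔ v ∈ Gl.TS := by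
  rw [hcomp.2.2.2, Finset.mem_union]
  exact or_iff_left fun hr => hcomp.notMem_right_of_mem_left hv (Gr.TS_sub hr)

theorem card_inter_add_card_inter_verts (hcomp : IsFalseTwin G Gl Gr) (hS : S ⊆ G.verts) :
    (S ∩ Gl.verts).card + (S ∩ Gr.verts).card = S.card :=
  Finset.card_inter_add_card_inter_of_subset_union hcomp.1 (hcomp.2.1 ▸ hS)

theorem card_inter_add_card_inter_TS (hcomp : IsFalseTwin G Gl Gr) (hX : X ⊆ G.TS) :
    (X ∩ Gl.TS).card + (X ∩ Gr.TS).card = X.card :=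
  Finset.card_inter_add_card_inter_of_subset_union (hcomp.1.mono Gl.TS_sub Gr.TS_sub)
    (hcomp.2.2.2 ▸ hX)

theorem sdiff_inter_left (hcomp : IsFalseTwin G Gl Gr) (hX : X ⊆ G.TS) :
    (S ∩ Gl.verts) \ (X ∩ Gl.TS) = (S \ X) ∩ Gl.verts := by
  ext v
  simp only [Finset.mem_sdiff, Finset.mem_inter]
  constructor
  · rintro ⟨⟨hvS, hvl⟩, hvX⟩
    exact ⟨⟨hvS, fun hx => hvX ⟨hx, (hcomp.mem_TS_iff_left hvl).1 (hX hx)⟩⟩, hvl⟩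
  · rintro ⟨⟨hvS, hvX⟩, hvl⟩
    exact ⟨⟨hvS, hvl⟩, fun hx => hvX hx.1⟩

theorem isPM_inter_left (hcomp : IsFalseTwin G Gl Gr) (hf : G.IsPM S f) :
    Gl.IsPM (S ∩ Gl.verts) f := by
  intro v hv
  obtain ⟨hvS, hvl⟩ := Finset.mem_inter.1 hv
  obtain ⟨hfv, hadj, hff⟩ := hf v hvS
  have hadjl : Gl.Adj v (f v) := (hcomp.adj_iff_left (Or.inl hvl)).1 hadj
  exact ⟨Finset.mem_inter.2 ⟨hfv, (Gl.adj_mem _ _ hadjl).2⟩, hadjl, hff⟩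

theorem isPM_sdiff_inter_left (hcomp : IsFalseTwin G Gl Gr) (hX : X ⊆ G.TS)
    (hf : G.IsPM (S \ X) f) : Gl.IsPM ((S ∩ Gl.verts) \ (X ∩ Gl.TS)) f := by
  rw [hcomp.sdiff_inter_left hX]
  exact hcomp.isPM_inter_left hf

theorem isPM_union (hcomp : IsFalseTwin G Gl Gr) (hg : Gl.IsPM Sl g) (hf : Gr.IsPM Sr f) :
    G.IsPM (Sl ∪ Sr) (Gl.verts.piecewise g f) := by
  intro v hv
  rcases Finset.mem_union.1 hv with hvl | hvr
  · obtain ⟨hgv, hadj, hgg⟩ := hg v hvl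
    have hvV := hg.subset_verts hvl
    have hgvV := hg.subset_verts hgv
    rw [Finset.piecewise_eq_of_mem _ _ _ hvV, Finset.piecewise_eq_of_mem _ _ _ hgvV]
    exact ⟨Finset.mem_union_left _ hgv, (hcomp.adj_iff_left (Or.inl hvV)).2 hadj, hgg⟩
  · obtain ⟨hfv, hadj, hff⟩ := hf v hvr
    have hvV := hcomp.symm.notMem_right_of_mem_left (hf.subset_verts hvr)
    have hfvV := hcomp.symm.notMem_right_of_mem_left (hf.subset_verts hfv)
    rw [Finset.piecewise_eq_of_notMem _ _ _ hvV, Finset.piecewise_eq_of_notMem _ _ _ hfvV]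
    exact ⟨Finset.mem_union_right _ hfv, (hcomp.symm.adj_iff_left
      (Or.inl (hf.subset_verts hvr))).2 hadj, hff⟩

theorem dominatesNonTwins_inter_left (hcomp : IsFalseTwin G Gl Gr)
    (h : G.DominatesNonTwins S) : Gl.DominatesNonTwins (S ∩ Gl.verts) := by
  intro v hvl hvTS
  have hvG : v ∈ G.verts := hcomp.2.1 ▸ Finset.mem_union_left _ hvl
  rcases h v hvG (mt (hcomp.mem_TS_iff_left hvl).1 hvTS) with hvS | ⟨u, huS, huv⟩
  · exact Or.inl (Finset.mem_inter.2 ⟨hvS, hvl⟩)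
  · have huvl := (hcomp.adj_iff_left (Or.inr hvl)).1 huv
    exact Or.inr ⟨u, Finset.mem_inter.2 ⟨huS, (Gl.adj_mem _ _ huvl).1⟩, huvl⟩

theorem dominatesNonTwins_union (hcomp : IsFalseTwin G Gl Gr) (hl : Gl.DominatesNonTwins Sl)
    (hr : Gr.DominatesNonTwins Sr) : G.DominatesNonTwins (Sl ∪ Sr) := by
  intro v hvG hvTS
  rw [hcomp.2.1, Finset.mem_union] at hvG
  rcases hvG with hvl | hvr
  · rcases hl v hvl (mt (hcomp.mem_TS_iff_left hvl).2 hvTS) with hvS | ⟨u, huS, huv⟩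
    · exact Or.inl (Finset.mem_union_left _ hvS)
    · exact Or.inr ⟨u, Finset.mem_union_left _ huS, (hcomp.adj_iff_left (Or.inr hvl)).2 huv⟩
  · rcases hr v hvr (mt (hcomp.symm.mem_TS_iff_left hvr).2 hvTS) with hvS | ⟨u, huS, huv⟩
    · exact Or.inl (Finset.mem_union_right _ hvS)
    · exact Or.inr ⟨u, Finset.mem_union_right _ huS,
        (hcomp.symm.adj_iff_left (Or.inr hvr)).2 huv⟩

theorem adm_inter_left (hcomp : IsFalseTwin G Gl Gr) (hdom : G.DominatesNonTwins S)
    (hX : X ⊆ S ∩ G.TS) (hf : G.IsPM (S \ X) f) :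
    Gl.Adm (X ∩ Gl.TS).card (S ∩ Gl.verts) :=
  have hXTS : X ⊆ G.TS := hX.trans Finset.inter_subset_right
  ⟨Finset.inter_subset_right, hcomp.dominatesNonTwins_inter_left hdom, X ∩ Gl.TS,
    Gl.inter_TS_subset (hX.trans Finset.inter_subset_left), rfl, f,
    hcomp.isPM_sdiff_inter_left hXTS hf⟩

theorem adm_union (hcomp : IsFalseTwin G Gl Gr) {kl kr : ℕ} (hl : Gl.Adm kl Sl)
    (hr : Gr.Adm kr Sr) : G.Adm (kl + kr) (Sl ∪ Sr) := by
  obtain ⟨hSl, hdoml, Xl, hXl, rfl, g, hg⟩ := hl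
  obtain ⟨hSr, hdomr, Xr, hXr, rfl, f, hf⟩ := hr
  have hXlV : Xl ⊆ Gl.verts := hXl.trans (Finset.inter_subset_right.trans Gl.TS_sub)
  have hXrV : Xr ⊆ Gr.verts := hXr.trans (Finset.inter_subset_right.trans Gr.TS_sub)
  -- `Xr` misses `Sl` and `Xl` misses `Sr`, because `V(Gl)` and `V(Gr)` are disjoint.
  have hsplit : (Sl ∪ Sr) \ (Xl ∪ Xr) = (Sl \ Xl) ∪ (Sr \ Xr) := by
    ext v
    simp only [Finset.mem_sdiff, Finset.mem_union]
    constructor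
    · rintro ⟨hvl | hvr, hvX⟩
      · exact Or.inl ⟨hvl, fun h => hvX (Or.inl h)⟩
      · exact Or.inr ⟨hvr, fun h => hvX (Or.inr h)⟩
    · rintro (⟨hvl, hvX⟩ | ⟨hvr, hvX⟩)
      · exact ⟨Or.inl hvl, fun h => h.elim hvX fun h' =>
          hcomp.notMem_right_of_mem_left (hSl hvl) (hXrV h')⟩
      · exact ⟨Or.inr hvr, fun h => h.elim (fun h' =>
          hcomp.notMem_right_of_mem_left (hXlV h') (hSr hvr)) hvX⟩
  refine ⟨hcomp.2.1 ▸ Finset.union_subset_union hSl hSr,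
    hcomp.dominatesNonTwins_union hdoml hdomr, Xl ∪ Xr, ?_, ?_, _,
    hsplit ▸ hcomp.isPM_union hg hf⟩
  · rw [hcomp.2.2.2]
    exact Finset.subset_inter
      (Finset.union_subset_union (hXl.trans Finset.inter_subset_left)
        (hXr.trans Finset.inter_subset_left))
      (Finset.union_subset_union (hXl.trans Finset.inter_subset_right)
        (hXr.trans Finset.inter_subset_right))
  · exact Finset.card_union_of_disjoint (hcomp.1.mono hXlV hXrV)

theorem memD_inter_left (hcomp : IsFalseTwin G Gl Gr) {k : ℕ} {D : Finset α} (hD : G.memD k D)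
    (hX : X ⊆ D ∩ G.TS) (hXcard : X.card = k) (hf : G.IsPM (D \ X) f) :
    Gl.memD (X ∩ Gl.TS).card (D ∩ Gl.verts) := by
  obtain ⟨⟨hDV, hdom, -⟩, hmin⟩ := hD
  refine ⟨hcomp.adm_inter_left hdom hX hf, fun S' hS' => ?_⟩
  have hk : (X ∩ Gl.TS).card + (X ∩ Gr.TS).card = k :=
    hXcard ▸ hcomp.card_inter_add_card_inter_TS (hX.trans Finset.inter_subset_right)
  have hglued : G.Adm k (S' ∪ (D ∩ Gr.verts)) :=
    hk ▸ hcomp.adm_union hS' (hcomp.symm.adm_inter_left hdom hX hf)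
  have := hcomp.card_inter_add_card_inter_verts hDV
  have := hmin _ hglued
  have := Finset.card_union_le S' (D ∩ Gr.verts)
  omega

end IsFalseTwin

end TSGraph

open TSGraph in
/-- For a false twin composition `G = Gl ⊙ Gr`, `D ∈ D_k(G)` with
unpaired set `X` and perfect matching `M` (encoded by the involution `f`) of
`G[D − X]`: `D_l ∈ D_{k_l}(Gl)` and `D_r ∈ D_{k_r}(Gr)`, and `X ∩ TS(Gl)`,
`X ∩ TS(Gr)` are sets of unpaired vertices with respect to `(D_l, M ∩ E(Gl))`
and `(D_r, M ∩ E(Gr))`, respectively. -/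
theorem stmt13 {α : Type*} [DecidableEq α] (G Gl Gr : TSGraph α)
    (hcomp : IsFalseTwin G Gl Gr) (k : ℕ) (D X : Finset α) (f : α → α)
    (hD : G.memD k D) (hX : X ⊆ D ∩ G.TS) (hXcard : X.card = k)
    (hf : G.IsPM (D \ X) f) :
    Gl.memD (X ∩ Gl.TS).card (D ∩ Gl.verts) ∧
    Gr.memD (X ∩ Gr.TS).card (D ∩ Gr.verts) ∧
    (X ∩ Gl.TS) ⊆ (D ∩ Gl.verts) ∩ Gl.TS ∧
    Gl.IsPM ((D ∩ Gl.verts) \ (X ∩ Gl.TS)) f ∧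
    (X ∩ Gr.TS) ⊆ (D ∩ Gr.verts) ∩ Gr.TS ∧
    Gr.IsPM ((D ∩ Gr.verts) \ (X ∩ Gr.TS)) f := by
  have hXD : X ⊆ D := hX.trans Finset.inter_subset_left
  have hXTS : X ⊆ G.TS := hX.trans Finset.inter_subset_right
  exact ⟨hcomp.memD_inter_left hD hX hXcard hf, hcomp.symm.memD_inter_left hD hX hXcard hf,
    Gl.inter_TS_subset hXD, hcomp.isPM_sdiff_inter_left hXTS hf,
    Gr.inter_TS_subset hXD, hcomp.symm.isPM_sdiff_inter_left hXTS hf⟩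
end

section
/- Let G = G_l ⊕ G_r be an attachment composition and let G̈ = G_l ⊗ G_r be the true twin composition of the same pair. For every 0 ≤ k ≤ |TS(G)|, if D_k(G) ≠ ∅ then D_k(G̈) ≠ ∅ and γ_k(G) ≥ γ_k(G̈). -/
/-
Adding the edges between `TS(G_r)` and `TS(G_l)` and enlarging the twin set from `TS(G_l)` to
`TS(G_l) ∪ TS(G_r)` only weakens the constraints on a set `S`: fewer vertices must be dominated,
more vertices are available for `X`, and a matching of `G_l ⊕ G_r` is still one of `G_l ⊗ G_r`.
So every admissible set for `G_l ⊕ G_r` is admissible for `G_l ⊗ G_r`, and the minimum over the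
larger family exists and can only be smaller.
-/

namespace TSGraph

variable {α : Type*}

theorem IsPM.mono {G H : TSGraph α} (hadj : ∀ u v, G.Adj u v → H.Adj u v) {S : Finset α}
    {f : α → α} (hf : G.IsPM S f) : H.IsPM S f := fun v hv =>
  let ⟨hfv, hvf, hff⟩ := hf v hv
  ⟨hfv, hadj _ _ hvf, hff⟩

variable [DecidableEq α]

theorem Adm.mono {G H : TSGraph α} (hverts : G.verts = H.verts) (hTS : G.TS ⊆ H.TS)
    (hadj : ∀ u v, G.Adj u v → H.Adj u v) {k : ℕ} {S : Finset α} (hS : G.Adm k S) :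
    H.Adm k S := by
  obtain ⟨hsub, hdom, X, hX, hXcard, f, hf⟩ := hS
  refine ⟨hverts ▸ hsub, fun v hv hvTS => ?_, X, hX.trans (Finset.inter_subset_inter_left hTS),
    hXcard, f, hf.mono hadj⟩
  obtain hvS | ⟨u, huS, huv⟩ := hdom v (hverts ▸ hv) (fun h => hvTS (hTS h))
  · exact Or.inl hvS
  · exact Or.inr ⟨u, huS, hadj u v huv⟩

theorem gamma_le_card {G : TSGraph α} {k : ℕ} {S : Finset α} (hS : G.Adm k S) :
    G.gamma k ≤ S.card :=
  Nat.sInf_le ⟨S, hS, rfl⟩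

theorem exists_adm_card_eq_gamma {G : TSGraph α} {k : ℕ} {S : Finset α} (hS : G.Adm k S) :
    ∃ T, G.Adm k T ∧ T.card = G.gamma k :=
  Nat.sInf_mem (s := {n | ∃ T, G.Adm k T ∧ T.card = n}) ⟨S.card, S, hS, rfl⟩

theorem dkNonempty_of_adm {G : TSGraph α} {k : ℕ} {S : Finset α} (hS : G.Adm k S) :
    G.DkNonempty k :=
  let ⟨T, hT, hTcard⟩ := exists_adm_card_eq_gamma hS
  ⟨T, hT, fun _ hS' => hTcard.trans_le (gamma_le_card hS')⟩

theorem gamma_le_of_adm_imp {G H : TSGraph α} {k : ℕ} (hGH : ∀ S, G.Adm k S → H.Adm k S)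
    {S : Finset α} (hS : G.Adm k S) : H.gamma k ≤ G.gamma k :=
  let ⟨T, hT, hTcard⟩ := exists_adm_card_eq_gamma hS
  hTcard ▸ gamma_le_card (hGH T hT)

theorem IsAttach.adm_of_isTrueTwin {G G2 Gl Gr : TSGraph α} (hG : IsAttach G Gl Gr)
    (hG2 : IsTrueTwin G2 Gl Gr) {k : ℕ} {S : Finset α} (hS : G.Adm k S) : G2.Adm k S := by
  obtain ⟨-, hverts, hadj, hTS⟩ := hG
  obtain ⟨-, hverts2, hadj2, hTS2⟩ := hG2
  refine hS.mono (hverts.trans hverts2.symm) ?_ fun u v huv => (hadj2 u v).2 ((hadj u v).1 huv)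
  rw [hTS, hTS2]
  exact Finset.subset_union_left

end TSGraph

open TSGraph in
/-- Let `G = Gl ⊕ Gr` and let `G2 = Gl ⊗ Gr` be the true twin
composition of the same pair. For every `0 ≤ k ≤ |TS(G)|`, if `D_k(G) ≠ ∅`
then `D_k(G2) ≠ ∅` and `γ_k(G) ≥ γ_k(G2)`. -/
theorem stmt16 {α : Type*} [DecidableEq α] (G G2 Gl Gr : TSGraph α)
    (hG : IsAttach G Gl Gr) (hG2 : IsTrueTwin G2 Gl Gr) :
    ∀ k ≤ G.TS.card, G.DkNonempty k →
      G2.DkNonempty k ∧ G2.gamma k ≤ G.gamma k := by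
  rintro k - ⟨S, hS, -⟩
  exact ⟨dkNonempty_of_adm (hG.adm_of_isTrueTwin hG2 hS),
    gamma_le_of_adm_imp (fun _ => hG.adm_of_isTrueTwin hG2) hS⟩
end
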